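/- arXiv:1011.3381 — 5 statements merged into one kernel-verified Lean document; each statement's English description precedes it below -/
import Mathlib

section
/- For every integer k with 0 ≤ k ≤ ν/2 − 1, if a graph G on ν vertices is 2k-factor-critical, then G is k-extendable. -/
open SimpleGraph

/-- `G` has a matching with exactly `k` edges. -/
def HasMatchingOfSize {V : Type*} (G : SimpleGraph V) (k : ℕ) : Prop :=
  ∃ M : G.Subgraph, M.IsMatching ∧ M.edgeSet.ncard = k

/-- `G` is `k`-extendable: connected, has a matching of size `k`, and every
matching of size `k` extends to a perfect matching. -/
def Extendable {V : Type*} (G : SimpleGraph V) (k : ℕ) : Prop :=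
  G.Connected ∧ HasMatchingOfSize G k ∧
    ∀ M : G.Subgraph, M.IsMatching → M.edgeSet.ncard = k →
      ∃ M' : G.Subgraph, M ≤ M' ∧ M'.IsPerfectMatching

/-- `G` is `n`-factor-critical: deleting any `n` vertices leaves a graph with
a perfect matching. -/
def FactorCritical {V : Type*} [Fintype V] (G : SimpleGraph V) (n : ℕ) : Prop :=
  ∀ S : Finset V, S.card = n →
    ∃ M : (G.induce ((↑S : Set V)ᶜ)).Subgraph, M.IsPerfectMatching

/-- `G` is `k½`-extendable: for every vertex `v`, `G - v` has a matching of
size `k`, and every matching of size `k` in `G - v` extends to a perfect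
matching of `G - v`. -/
def HalfExtendable {V : Type*} (G : SimpleGraph V) (k : ℕ) : Prop :=
  ∀ v : V,
    HasMatchingOfSize (G.induce ({v}ᶜ : Set V)) k ∧
    ∀ M : (G.induce ({v}ᶜ : Set V)).Subgraph, M.IsMatching → M.edgeSet.ncard = k →
      ∃ M' : (G.induce ({v}ᶜ : Set V)).Subgraph, M ≤ M' ∧ M'.IsPerfectMatching

/-!
A matching with `k` edges covers exactly `2k` vertices. Deleting them leaves a graph with a
perfect matching, and together the two matchings form a perfect matching of `G`. A matching
with `k` edges exists: as long as a matching covers at most `2k < ν` vertices, enlarge its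
vertex set to `2k` vertices; any vertex outside this set and its partner in a perfect matching
of the rest form an edge disjoint from the matching.
-/

namespace SimpleGraph

variable {V : Type*} {G : SimpleGraph V}

lemma Subgraph.IsMatching.ncard_verts [Finite V] {M : G.Subgraph} (hM : M.IsMatching) :
    M.verts.ncard = 2 * M.edgeSet.ncard := by
  classical
  have := Fintype.ofFinite V
  calc M.verts.ncard = Fintype.card M.coe.Dart := by
        rw [← Nat.card_coe_set_eq, Nat.card_eq_fintype_card]
        refine (Fintype.card_of_bijective (f := fun d : M.coe.Dart => d.fst) ⟨?_, ?_⟩).symm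
        · rintro ⟨⟨v, w⟩, hvw⟩ ⟨⟨v', w'⟩, hvw'⟩ (rfl : v = v')
          have : w = w' := Subtype.ext (hM.eq_of_adj_left hvw hvw')
          subst this; rfl
        · intro v
          obtain ⟨w, hvw, -⟩ := hM v.2
          exact ⟨⟨(v, ⟨w, M.edge_vert hvw.symm⟩), hvw⟩, rfl⟩
    _ = 2 * M.coe.edgeFinset.card := M.coe.dart_card_eq_twice_card_edges
    _ = 2 * M.edgeSet.ncard := by
        rw [← M.image_coe_edgeSet_coe, Set.ncard_image_of_injective _
          (Sym2.map.injective Subtype.val_injective), Set.ncard_eq_toFinset_card']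
        rfl

lemma Subgraph.IsMatching.sup_subgraphOfAdj {M : G.Subgraph} (hM : M.IsMatching) {v w : V}
    (hvw : G.Adj v w) (hv : v ∉ M.verts) (hw : w ∉ M.verts) :
    (M ⊔ G.subgraphOfAdj hvw).IsMatching := by
  refine hM.sup (.subgraphOfAdj hvw) ?_
  rw [hM.support_eq_verts, support_subgraphOfAdj, Set.disjoint_left]
  rintro x hx (rfl | rfl) <;> contradiction

lemma Subgraph.ncard_edgeSet_sup_subgraphOfAdj [Finite V] {M : G.Subgraph} {v w : V}
    (hvw : G.Adj v w) (hv : v ∉ M.verts) :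
    (M ⊔ G.subgraphOfAdj hvw).edgeSet.ncard = M.edgeSet.ncard + 1 := by
  have hnotMem : s(v, w) ∉ M.edgeSet := fun he => hv (M.edge_vert he)
  rw [Subgraph.edgeSet_sup, edgeSet_subgraphOfAdj, Set.union_singleton,
    Set.ncard_insert_of_notMem hnotMem]

end SimpleGraph

namespace FactorCritical

variable {V : Type*} [Fintype V] {G : SimpleGraph V} {n : ℕ}

lemma exists_adj_of_ncard_le (hG : FactorCritical G n) (hn : n < Fintype.card V) {T : Set V}
    (hT : T.ncard ≤ n) :
    ∃ v w, G.Adj v w ∧ v ∉ T ∧ w ∉ T := by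
  classical
  obtain ⟨S, hTS, -, hS⟩ := Finset.exists_subsuperset_card_eq (n := n)
    (Finset.subset_univ T.toFinset) (by rwa [← Set.ncard_eq_toFinset_card'])
    (by rw [Finset.card_univ]; exact hn.le)
  obtain ⟨N, hN⟩ := hG S hS
  obtain ⟨v, hvS⟩ : ∃ v, v ∉ S := by
    by_contra! h
    rw [Finset.eq_univ_of_forall h, Finset.card_univ] at hS
    omega
  obtain ⟨w, hvw, -⟩ := hN.1 (hN.2 ⟨v, hvS⟩)
  have hT_sub : T ⊆ S := fun x hx => hTS (Set.mem_toFinset.mpr hx)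
  exact ⟨v, w, N.adj_sub hvw, fun hv => hvS (hT_sub hv), fun hw => w.2 (hT_sub hw)⟩

lemma exists_isPerfectMatching_le (hG : FactorCritical G n) {M : G.Subgraph} (hM : M.IsMatching)
    (hcard : M.verts.ncard = n) :
    ∃ M' : G.Subgraph, M ≤ M' ∧ M'.IsPerfectMatching := by
  classical
  obtain ⟨N, hN⟩ := hG M.verts.toFinset (by rwa [← Set.ncard_eq_toFinset_card'])
  let f := Embedding.induce (G := G) (↑M.verts.toFinset : Set V)ᶜ
  let N' := N.map f.toHom
  have hN'verts : N'.verts = M.vertsᶜ := by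
    ext v
    simp [N', f, hN.2.verts_eq_univ]
  have hN' : N'.IsMatching := hN.1.map f.toHom f.injective
  refine ⟨M ⊔ N', le_sup_left, hM.sup hN' ?_, fun v => ?_⟩
  · rw [hM.support_eq_verts, hN'.support_eq_verts, hN'verts]
    exact disjoint_compl_right
  · show v ∈ M.verts ∪ N'.verts
    simp [hN'verts]

lemma hasMatchingOfSize (hG : FactorCritical G n) (hn : n < Fintype.card V) {j : ℕ}
    (hj : 2 * j ≤ n) : HasMatchingOfSize G j := by
  induction j with
  | zero => exact ⟨⊥, fun v hv => hv.elim, by simp⟩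
  | succ j ih =>
    obtain ⟨M, hM, rfl⟩ := ih (by omega)
    obtain ⟨v, w, hvw, hv, hw⟩ := hG.exists_adj_of_ncard_le hn (T := M.verts)
      (by rw [hM.ncard_verts]; omega)
    exact ⟨_, hM.sup_subgraphOfAdj hvw hv hw, M.ncard_edgeSet_sup_subgraphOfAdj hvw hv⟩

end FactorCritical

/-- a connected `2k`-factor-critical graph with `k ≤ ν/2 - 1` is `k`-extendable. -/
theorem stmt0 {V : Type*} [Fintype V] (G : SimpleGraph V) (k : ℕ)
    (hconn : G.Connected) (hk : 2 * k + 2 ≤ Fintype.card V)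
    (hfc : FactorCritical G (2 * k)) : Extendable G k :=
  ⟨hconn, hfc.hasMatchingOfSize (by omega) le_rfl, fun _ hM hMk =>
    hfc.exists_isPerfectMatching_le hM (by rw [hM.ncard_verts, hMk])⟩
end

section
/- If G is a k-extendable graph on ν ≥ 2k+2 vertices with k ≥ 1, then G is (k−1)-extendable. -/
open SimpleGraph

/-! Let `M` be a matching with at most `k` edges and `F` a perfect matching sharing as many edges
with `M` as possible. If some edge `xy` of `M` is missing from `F`, then, since `F` has at least
`k + 1` edges, at least `k - 1` of them avoid `x` and `y`; these include `M ∩ F`. Completing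
`M ∩ F` by such edges to `k - 1` edges and adding `xy` gives a `k`-matching, whose extension to a
perfect matching shares strictly more edges with `M` than `F` does. -/

namespace SimpleGraph.Subgraph

variable {V : Type*} {G : SimpleGraph V} {M F : G.Subgraph}

lemma IsMatching.eq_of_mem_edgeSet (hM : M.IsMatching) {e f : Sym2 V} {v : V}
    (he : e ∈ M.edgeSet) (hf : f ∈ M.edgeSet) (hve : v ∈ e) (hvf : v ∈ f) : e = f := by
  obtain ⟨w, rfl⟩ := Sym2.mem_iff_exists.mp hve
  obtain ⟨w', rfl⟩ := Sym2.mem_iff_exists.mp hvf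
  rw [Subgraph.mem_edgeSet] at he hf
  rw [hM.eq_of_adj_left he hf]

lemma IsMatching.ncard_incidenceSet_le_one [Finite V] (hM : M.IsMatching) (v : V) :
    (M.incidenceSet v).ncard ≤ 1 :=
  (Set.ncard_le_one (Set.toFinite _)).mpr fun _ he _ hf =>
    hM.eq_of_mem_edgeSet he.1 hf.1 he.2 hf.2

lemma IsMatching.ncard_edgeSet_le [Finite V] (hM : M.IsMatching) (x y : V) :
    M.edgeSet.ncard ≤ (M.edgeSet \ (M.incidenceSet x ∪ M.incidenceSet y)).ncard + 2 := by
  have := Set.ncard_le_ncard_sdiff_add_ncard M.edgeSet (M.incidenceSet x ∪ M.incidenceSet y)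
  have := Set.ncard_union_le (M.incidenceSet x) (M.incidenceSet y)
  have := hM.ncard_incidenceSet_le_one x
  have := hM.ncard_incidenceSet_le_one y
  omega

lemma IsMatching.two_mul_ncard_edgeSet [Finite V] (hM : M.IsMatching) :
    2 * M.edgeSet.ncard = M.verts.ncard := by
  classical
  cases nonempty_fintype V
  have hdeg (v : M.verts) [Fintype (M.coe.neighborSet v)] : M.coe.degree v = 1 := by
    rw [coe_degree]; convert isMatching_iff_forall_degree.mp hM v v.2
  rw [← M.image_coe_edgeSet_coe, Set.ncard_image_of_injective _
    (Sym2.map.injective Subtype.val_injective), Set.ncard_eq_toFinset_card',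
    ← edgeFinset, ← M.coe.sum_degrees_eq_twice_card_edges]
  simp [hdeg, Set.ncard_eq_toFinset_card']

lemma IsPerfectMatching.two_mul_ncard_edgeSet [Finite V] (hF : F.IsPerfectMatching) :
    2 * F.edgeSet.ncard = Nat.card V := by
  rw [hF.1.two_mul_ncard_edgeSet, hF.2.verts_eq_univ, Set.ncard_univ]

lemma exists_isMatching_edgeSet_eq {s : Set (Sym2 V)} (hsG : s ⊆ G.edgeSet)
    (hs : ∀ e ∈ s, ∀ f ∈ s, ∀ v ∈ e, v ∈ f → e = f) :
    ∃ M : G.Subgraph, M.IsMatching ∧ M.edgeSet = s := by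
  refine ⟨{ verts := {v | ∃ e ∈ s, v ∈ e}
            Adj := fun v w => s(v, w) ∈ s
            adj_sub := fun h => hsG h
            edge_vert := fun h => ⟨_, h, Sym2.mem_mk_left _ _⟩
            symm := ⟨fun v w h => by rwa [Sym2.eq_swap]⟩ }, ?_, ?_⟩
  · rintro v ⟨e, he, hve⟩
    obtain ⟨w, rfl⟩ := Sym2.mem_iff_exists.mp hve
    exact ⟨w, he, fun w' hw' => Sym2.congr_right.mp (hs _ hw' _ he v (by simp) (by simp))⟩
  · ext e
    induction e using Sym2.ind
    rfl

lemma IsMatching.exists_isMatching_edgeSet_eq_insert (hF : F.IsMatching) {x y : V}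
    (hxy : G.Adj x y) {E : Set (Sym2 V)}
    (hE : E ⊆ F.edgeSet \ (F.incidenceSet x ∪ F.incidenceSet y)) :
    ∃ N : G.Subgraph, N.IsMatching ∧ N.edgeSet = insert s(x, y) E := by
  have hEx {f} (hf : f ∈ E) : x ∉ f ∧ y ∉ f := by
    obtain ⟨hfF, hf⟩ := hE hf
    exact ⟨fun hx => hf (Or.inl ⟨hfF, hx⟩), fun hy => hf (Or.inr ⟨hfF, hy⟩)⟩
  refine exists_isMatching_edgeSet_eq
    (Set.insert_subset hxy fun f hf => F.edgeSet_subset (hE hf).1) ?_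
  rintro e (rfl | he) f (rfl | hf) v hve hvf
  · rfl
  · rcases Sym2.mem_iff.mp hve with rfl | rfl
    exacts [((hEx hf).1 hvf).elim, ((hEx hf).2 hvf).elim]
  · rcases Sym2.mem_iff.mp hvf with rfl | rfl
    exacts [((hEx he).1 hve).elim, ((hEx he).2 hve).elim]
  · exact hF.eq_of_mem_edgeSet (hE he).1 (hE hf).1 hve hvf

lemma IsSpanning.le_of_edgeSet_subset (hF : F.IsSpanning) (h : M.edgeSet ⊆ F.edgeSet) : M ≤ F :=
  ⟨fun v _ => hF v, fun v w hvw => h (show s(v, w) ∈ M.edgeSet from hvw)⟩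

end SimpleGraph.Subgraph

open SimpleGraph.Subgraph

lemma HasMatchingOfSize.mono {V : Type*} {G : SimpleGraph V} {k j : ℕ}
    (h : HasMatchingOfSize G k) (hjk : j ≤ k) : HasMatchingOfSize G j := by
  obtain ⟨M, hM, rfl⟩ := h
  obtain ⟨s, hsM, rfl⟩ := Set.exists_subset_card_eq hjk
  obtain ⟨N, hN, hNs⟩ := exists_isMatching_edgeSet_eq (hsM.trans M.edgeSet_subset)
    fun e he f hf v => hM.eq_of_mem_edgeSet (hsM he) (hsM hf)
  exact ⟨N, hN, by rw [hNs]⟩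

section

variable {V : Type*} [Finite V] {G : SimpleGraph V} {k : ℕ} {M F : G.Subgraph}

lemma Extendable.exists_isPerfectMatching_ncard_inter_lt (hext : Extendable G k)
    (hν : 2 * k + 2 ≤ Nat.card V) (hM : M.IsMatching) (hMk : M.edgeSet.ncard ≤ k)
    (hF : F.IsPerfectMatching) (hMF : ¬M.edgeSet ⊆ F.edgeSet) :
    ∃ F' : G.Subgraph, F'.IsPerfectMatching ∧
      (M.edgeSet ∩ F.edgeSet).ncard < (M.edgeSet ∩ F'.edgeSet).ncard := by
  obtain ⟨e, heM, heF⟩ := Set.not_subset.mp hMF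
  induction e using Sym2.ind with | _ x y =>
  have hF_card := hF.1.ncard_edgeSet_le x y
  set T := F.edgeSet \ (F.incidenceSet x ∪ F.incidenceSet y)
  have hMF_T : M.edgeSet ∩ F.edgeSet ⊆ T := by
    rintro f ⟨hfM, hfF⟩
    refine ⟨hfF, fun hf => heF ?_⟩
    obtain ⟨-, hv⟩ | ⟨-, hv⟩ := hf
    · rwa [← hM.eq_of_mem_edgeSet hfM heM hv (Sym2.mem_mk_left x y)]
    · rwa [← hM.eq_of_mem_edgeSet hfM heM hv (Sym2.mem_mk_right x y)]
  have hMF_lt : (M.edgeSet ∩ F.edgeSet).ncard < M.edgeSet.ncard :=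
    Set.ncard_lt_ncard ((Set.ssubset_iff_of_subset Set.inter_subset_left).mpr
      ⟨_, heM, fun h => heF h.2⟩)
  have hT : k - 1 ≤ T.ncard := by
    have := hF.two_mul_ncard_edgeSet
    omega
  obtain ⟨E, hMF_E, hET, hEk⟩ := Set.exists_subsuperset_card_eq hMF_T (by omega) hT
  have hxyE : s(x, y) ∉ E := fun h => heF (hET h).1
  obtain ⟨N, hN, hNE⟩ := hF.1.exists_isMatching_edgeSet_eq_insert (M.adj_sub heM) hET
  obtain ⟨F', hNF', hF'⟩ := hext.2.2 N hN (by rw [hNE, Set.ncard_insert_of_notMem hxyE]; omega)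
  have hNF'_edges : insert s(x, y) E ⊆ F'.edgeSet := hNE ▸ edgeSet_mono hNF'
  refine ⟨F', hF', Set.ncard_lt_ncard ((Set.ssubset_iff_of_subset ?_).mpr ?_)⟩
  · exact fun f hf => ⟨hf.1, hNF'_edges (Set.mem_insert_of_mem _ (hMF_E hf))⟩
  · exact ⟨_, ⟨heM, hNF'_edges (Set.mem_insert _ _)⟩, fun h => heF h.2⟩

theorem Extendable.exists_le_isPerfectMatching (hext : Extendable G k)
    (hν : 2 * k + 2 ≤ Nat.card V) (hM : M.IsMatching) (hMk : M.edgeSet.ncard ≤ k) :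
    ∃ F : G.Subgraph, M ≤ F ∧ F.IsPerfectMatching := by
  obtain ⟨M₀, hM₀, hM₀k⟩ := hext.2.1
  obtain ⟨F₀, -, hF₀⟩ := hext.2.2 M₀ hM₀ hM₀k
  obtain ⟨F, hF, hFmax⟩ := Set.exists_max_image {F : G.Subgraph | F.IsPerfectMatching}
    (fun F => (M.edgeSet ∩ F.edgeSet).ncard) (Set.toFinite _) ⟨F₀, hF₀⟩
  refine ⟨F, hF.2.le_of_edgeSet_subset ?_, hF⟩
  by_contra hMF
  obtain ⟨F', hF', hlt⟩ := hext.exists_isPerfectMatching_ncard_inter_lt hν hM hMk hF hMF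
  exact (hFmax F' hF').not_gt hlt

end

theorem stmt2_general {V : Type*} [Fintype V] (G : SimpleGraph V) (k : ℕ)
    (hν : 2 * k + 2 ≤ Fintype.card V)
    (hext : Extendable G k) : Extendable G (k - 1) :=
  ⟨hext.1, hext.2.1.mono (Nat.sub_le k 1), fun _ hM hMk =>
    hext.exists_le_isPerfectMatching (by rwa [Nat.card_eq_fintype_card]) hM
      (hMk ▸ Nat.sub_le k 1)⟩

/-- a `k`-extendable graph on `ν ≥ 2k+2` vertices with `k ≥ 1` is `(k-1)`-extendable. -/
theorem stmt2 {V : Type*} [Fintype V] (G : SimpleGraph V) (k : ℕ)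
    (hk : 1 ≤ k) (hν : 2 * k + 2 ≤ Fintype.card V)
    (hext : Extendable G k) : Extendable G (k - 1) :=
  stmt2_general G k hν hext
end

section
/- If G is a k-extendable graph on ν ≥ 2k+2 vertices, then G is m-extendable for every integer m with 0 ≤ m ≤ k. -/
open SimpleGraph

/-!
Let `M` be a matching of size `m < k` in a `k`-extendable graph `G` with `|V(G)| ≥ 2k + 2`; by
induction it suffices to treat `m = k - 1`. Augmenting `M` along the path that starts at an
`M`-unsaturated vertex and alternates between edges of a perfect matching `F` and edges of `M`
yields a matching `N` of size `k` that saturates every vertex saturated by `M`. Extending `N` to a perfect matching `F'`, any `F'`-edge at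
one of the at least two `N`-unsaturated vertices joins two `M`-unsaturated vertices, so adding it
to `M` gives a matching of size `k`, which extends to a perfect matching.
-/

namespace SimpleGraph.Subgraph

variable {V : Type*} {G : SimpleGraph V} {M F : G.Subgraph} {u v x y : V}

lemma IsMatching.deleteVerts_pair (hM : M.IsMatching) (hxy : M.Adj x y) :
    (M.deleteVerts {x, y}).IsMatching := by
  rintro v ⟨hv, hvxy⟩
  obtain ⟨w, hvw, hw⟩ := hM hv
  have hwxy : w ∉ ({x, y} : Set V) := by
    rintro (rfl | rfl)
    · exact hvxy (Or.inr (hM.eq_of_adj_left hvw.symm hxy))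
    · exact hvxy (Or.inl (hM.eq_of_adj_left hvw.symm hxy.symm))
  exact ⟨w, deleteVerts_adj.2 ⟨hv, hvxy, M.edge_vert hvw.symm, hwxy, hvw⟩,
    fun w' hw' => hw w' (deleteVerts_adj.1 hw').2.2.2.2⟩

lemma IsMatching.edgeSet_deleteVerts_pair (hM : M.IsMatching) (hxy : M.Adj x y) :
    (M.deleteVerts {x, y}).edgeSet = M.edgeSet \ {s(x, y)} := by
  refine Set.ext (Sym2.ind fun a b => ?_)
  simp only [Subgraph.mem_edgeSet, deleteVerts_adj, Set.mem_sdiff, Set.mem_singleton_iff,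
    Set.mem_insert_iff, Sym2.eq_iff]
  constructor
  · rintro ⟨-, ha, -, hb, hab⟩
    exact ⟨hab, by tauto⟩
  · rintro ⟨hab, hne⟩
    refine ⟨M.edge_vert hab, ?_, M.edge_vert hab.symm, ?_, hab⟩
    · rintro (rfl | rfl)
      · exact hne (Or.inl ⟨rfl, hM.eq_of_adj_left hab hxy⟩)
      · exact hne (Or.inr ⟨rfl, hM.eq_of_adj_left hab hxy.symm⟩)
    · rintro (rfl | rfl)
      · exact hne (Or.inr ⟨hM.eq_of_adj_left hab.symm hxy, rfl⟩)
      · exact hne (Or.inl ⟨hM.eq_of_adj_left hab.symm hxy.symm, rfl⟩)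

lemma IsMatching.ncard_edgeSet_deleteVerts_pair [Finite V] (hM : M.IsMatching)
    (hxy : M.Adj x y) : (M.deleteVerts {x, y}).edgeSet.ncard + 1 = M.edgeSet.ncard := by
  rw [hM.edgeSet_deleteVerts_pair hxy,
    Set.ncard_sdiff_singleton_add_one (Subgraph.mem_edgeSet.2 hxy)]

lemma IsMatching.sup_subgraphOfAdj_s4 (hM : M.IsMatching) (huv : G.Adj u v) (hu : u ∉ M.verts)
    (hv : v ∉ M.verts) : (M ⊔ G.subgraphOfAdj huv).IsMatching := by
  refine hM.sup (.subgraphOfAdj huv) ?_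
  rw [hM.support_eq_verts, (IsMatching.subgraphOfAdj huv).support_eq_verts, subgraphOfAdj_verts]
  exact Set.disjoint_insert_right.2 ⟨hu, Set.disjoint_singleton_right.2 hv⟩

lemma ncard_edgeSet_sup_subgraphOfAdj_s4 [Finite V] (huv : G.Adj u v) (hu : u ∉ M.verts) :
    (M ⊔ G.subgraphOfAdj huv).edgeSet.ncard = M.edgeSet.ncard + 1 := by
  rw [edgeSet_sup, edgeSet_subgraphOfAdj, Set.union_singleton,
    Set.ncard_insert_of_notMem fun h => hu (M.edge_vert (Subgraph.mem_edgeSet.1 h))]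

lemma IsMatching.ncard_verts_s4 [Finite V] (hM : M.IsMatching) :
    M.verts.ncard = 2 * M.edgeSet.ncard := by
  induction h : M.edgeSet.ncard generalizing M with
  | zero =>
    rw [Set.ncard_eq_zero] at h ⊢
    refine Set.eq_empty_of_forall_notMem fun v hv => ?_
    obtain ⟨w, hvw, -⟩ := hM hv
    exact (h ▸ Subgraph.mem_edgeSet.2 hvw : s(v, w) ∈ (∅ : Set (Sym2 V)))
  | succ n ih =>
    obtain ⟨e, he⟩ := Set.nonempty_of_ncard_ne_zero (by omega : M.edgeSet.ncard ≠ 0)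
    induction e with
    | _ x y =>
      rw [Subgraph.mem_edgeSet] at he
      have hxy : ({x, y} : Set V) ⊆ M.verts :=
        Set.insert_subset (M.edge_vert he) (Set.singleton_subset_iff.2 (M.edge_vert he.symm))
      have hdel := ih (hM.deleteVerts_pair he) (by
        have := hM.ncard_edgeSet_deleteVerts_pair he; omega)
      rw [deleteVerts_verts] at hdel
      have := Set.ncard_sdiff_add_ncard_of_subset hxy
      rw [Set.ncard_pair he.ne] at this
      omega

lemma IsMatching.exists_notMem_verts [Fintype V] (hM : M.IsMatching)
    (h : 2 * M.edgeSet.ncard < Fintype.card V) : ∃ v, v ∉ M.verts := by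
  by_contra! hall
  rw [← hM.ncard_verts_s4, Set.eq_univ_of_forall hall, Set.ncard_univ,
    Nat.card_eq_fintype_card] at h
  exact h.false

lemma IsPerfectMatching.exists_adj_notMem_verts (hF : F.IsPerfectMatching) (hM : M.IsMatching)
    (hMF : M ≤ F) (hu : u ∉ M.verts) : ∃ v, v ∉ M.verts ∧ F.Adj u v := by
  obtain ⟨v, huv, -⟩ := hF.1 (hF.2 u)
  refine ⟨v, fun hv => ?_, huv⟩
  obtain ⟨w, hvw, -⟩ := hM hv
  obtain rfl : w = u := hF.1.eq_of_adj_left (hMF.2 hvw) huv.symm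
  exact hu (M.edge_vert hvw.symm)

/-- The witness is `M - xy + zx`. -/
lemma IsMatching.exists_shift [Finite V] (hM : M.IsMatching) {z : V} (hz : z ∉ M.verts)
    (hzx : F.Adj z x) (hxy : M.Adj x y) :
    ∃ M₁ : G.Subgraph, M₁.IsMatching ∧ M₁.edgeSet.ncard = M.edgeSet.ncard ∧
      M₁.edgeSet \ F.edgeSet = (M.edgeSet \ F.edgeSet) \ {s(x, y)} ∧
      y ∉ M₁.verts ∧ insert z M.verts ⊆ insert y M₁.verts := by
  have hzy : z ≠ y := fun h => hz (h ▸ M.edge_vert hxy.symm)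
  have hz₀ : z ∉ (M.deleteVerts {x, y}).verts := fun h => hz h.1
  have hx₀ : x ∉ (M.deleteVerts {x, y}).verts := fun h => h.2 (Or.inl rfl)
  refine ⟨M.deleteVerts {x, y} ⊔ G.subgraphOfAdj hzx.adj_sub,
    (hM.deleteVerts_pair hxy).sup_subgraphOfAdj_s4 _ hz₀ hx₀, ?_, ?_, ?_, ?_⟩
  · rw [ncard_edgeSet_sup_subgraphOfAdj_s4 _ hz₀, hM.ncard_edgeSet_deleteVerts_pair hxy]
  · have hzx_F : s(z, x) ∈ F.edgeSet := hzx
    rw [edgeSet_sup, hM.edgeSet_deleteVerts_pair hxy, edgeSet_subgraphOfAdj]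
    ext e
    simp only [Set.mem_sdiff, Set.mem_union, Set.mem_singleton_iff]
    constructor
    · rintro ⟨⟨he, hexy⟩ | rfl, heF⟩
      · exact ⟨⟨he, heF⟩, hexy⟩
      · exact absurd hzx_F heF
    · rintro ⟨⟨he, heF⟩, hexy⟩
      exact ⟨Or.inl ⟨he, hexy⟩, heF⟩
  · simp [verts_sup, hzy.symm, hxy.ne.symm]
  · intro a
    simp only [verts_sup, deleteVerts_verts, subgraphOfAdj_verts, Set.mem_insert_iff,
      Set.mem_union, Set.mem_sdiff, Set.mem_singleton_iff]
    tauto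

theorem IsPerfectMatching.exists_isMatching_ncard_succ [Finite V] (hF : F.IsPerfectMatching)
    (hM : M.IsMatching) {z : V} (hz : z ∉ M.verts) :
    ∃ N : G.Subgraph, N.IsMatching ∧ N.edgeSet.ncard = M.edgeSet.ncard + 1 ∧
      insert z M.verts ⊆ N.verts := by
  induction hd : (M.edgeSet \ F.edgeSet).ncard using Nat.strong_induction_on
    generalizing M z with
  | _ d ih =>
  obtain ⟨x, hzx, -⟩ := hF.1 (hF.2 z)
  by_cases hx : x ∈ M.verts
  · obtain ⟨y, hxy, -⟩ := hM hx
    have hxy_F : s(x, y) ∈ M.edgeSet \ F.edgeSet := ⟨hxy, fun h =>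
      hz (hF.1.eq_of_adj_left hzx.symm h ▸ M.edge_vert hxy.symm)⟩
    obtain ⟨M₁, hM₁, hcard, hdiff, hy₁, hverts⟩ := hM.exists_shift hz hzx hxy
    obtain ⟨N, hN, hNcard, hNverts⟩ :=
      ih _ (hd ▸ hdiff ▸ Set.ncard_sdiff_singleton_lt_of_mem hxy_F) hM₁ hy₁ rfl
    exact ⟨N, hN, hcard ▸ hNcard, hverts.trans hNverts⟩
  · refine ⟨_, hM.sup_subgraphOfAdj_s4 hzx.adj_sub hz hx,
      ncard_edgeSet_sup_subgraphOfAdj_s4 hzx.adj_sub hz, ?_⟩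
    rw [verts_sup, subgraphOfAdj_verts]
    exact Set.insert_subset (Or.inr (Or.inl rfl)) Set.subset_union_left

end SimpleGraph.Subgraph

open SimpleGraph.Subgraph

theorem HasMatchingOfSize.of_succ {V : Type*} [Finite V] {G : SimpleGraph V} {n : ℕ}
    (h : HasMatchingOfSize G (n + 1)) : HasMatchingOfSize G n := by
  obtain ⟨M, hM, hMcard⟩ := h
  obtain ⟨e, he⟩ := Set.nonempty_of_ncard_ne_zero (by omega : M.edgeSet.ncard ≠ 0)
  induction e with
  | _ x y =>
    rw [Subgraph.mem_edgeSet] at he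
    exact ⟨_, hM.deleteVerts_pair he, by
      have := hM.ncard_edgeSet_deleteVerts_pair he; omega⟩

theorem Extendable.exists_adj_notMem_verts {V : Type*} [Fintype V] {G : SimpleGraph V} {n : ℕ}
    (hν : 2 * n + 4 ≤ Fintype.card V) (h : Extendable G (n + 1)) {M : G.Subgraph}
    (hM : M.IsMatching) (hMcard : M.edgeSet.ncard = n) :
    ∃ u v, u ∉ M.verts ∧ v ∉ M.verts ∧ G.Adj u v := by
  obtain ⟨-, ⟨M₀, hM₀, hM₀card⟩, hextend⟩ := h
  obtain ⟨F, -, hF⟩ := hextend M₀ hM₀ hM₀card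
  obtain ⟨z, hz⟩ := hM.exists_notMem_verts (by omega)
  obtain ⟨N, hN, hNcard, hMN⟩ := hF.exists_isMatching_ncard_succ hM hz
  obtain ⟨F', hNF', hF'⟩ := hextend N hN (by omega)
  obtain ⟨u, hu⟩ := hN.exists_notMem_verts (by omega)
  obtain ⟨v, hv, huv⟩ := hF'.exists_adj_notMem_verts hN hNF' hu
  exact ⟨u, v, fun h => hu (hMN (Or.inr h)), fun h => hv (hMN (Or.inr h)), huv.adj_sub⟩

theorem Extendable.of_succ {V : Type*} [Fintype V] {G : SimpleGraph V} {n : ℕ}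
    (hν : 2 * n + 4 ≤ Fintype.card V) (h : Extendable G (n + 1)) : Extendable G n := by
  refine ⟨h.1, h.2.1.of_succ, fun M hM hMcard => ?_⟩
  obtain ⟨u, v, hu, hv, huv⟩ := h.exists_adj_notMem_verts hν hM hMcard
  obtain ⟨F, hle, hF⟩ := h.2.2 _ (hM.sup_subgraphOfAdj_s4 huv hu hv)
    (by rw [ncard_edgeSet_sup_subgraphOfAdj_s4 huv hu, hMcard])
  exact ⟨F, le_sup_left.trans hle, hF⟩

/-- a `k`-extendable graph on `ν ≥ 2k+2` vertices is `m`-extendable for all `m ≤ k`. -/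
theorem stmt4 {V : Type*} [Fintype V] (G : SimpleGraph V) (k : ℕ)
    (hν : 2 * k + 2 ≤ Fintype.card V) (hext : Extendable G k)
    (m : ℕ) (hm : m ≤ k) : Extendable G m := by
  induction k, hm using Nat.le_induction with
  | base => exact hext
  | succ k _ ih => exact ih (by omega) (hext.of_succ (by omega))
end

section
/- For k ≥ 2, the graph G^(k) = (K_{2k−1} ∪ K_1) ∨ (K_{2k−1} ∪ K_1) on 4k vertices is k-extendable. -/
open SimpleGraph

/-- Vertex type of `(K_{2k-1} ∪ K_1) ∨ (K_{2k-1} ∪ K_1)`. -/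
abbrev GkV (k : ℕ) := (Fin (2 * k - 1) ⊕ Fin 1) ⊕ (Fin (2 * k - 1) ⊕ Fin 1)

/-- The graph `G^(k) = (K_{2k-1} ∪ K_1) ∨ (K_{2k-1} ∪ K_1)`: all edges between the
two halves, plus a complete graph on the `Fin (2k-1)` part of each half. -/
def Gk (k : ℕ) : SimpleGraph (GkV k) :=
  SimpleGraph.fromRel (fun x y =>
    x.isLeft ≠ y.isLeft ∨
    (∃ a b, x = Sum.inl (Sum.inl a) ∧ y = Sum.inl (Sum.inl b)) ∨
    (∃ a b, x = Sum.inr (Sum.inl a) ∧ y = Sum.inr (Sum.inl b)))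


section MatchingHelpers
variable {V : Type*} [Fintype V] {G : SimpleGraph V}

lemma stmt8_matching_ncard_verts {M : G.Subgraph}
    (h : M.IsMatching) : M.verts.ncard = 2 * M.edgeSet.ncard := by
  classical
  set f : V → Sym2 V := fun v => if hv : ∃ w, M.Adj v w then s(v, hv.choose) else s(v, v) with hf
  have hfv : ∀ v w, M.Adj v w → f v = s(v, w) := by
    intro v w hvw
    have hex : ∃ u, M.Adj v u := ⟨w, hvw⟩
    have huniq := h (M.edge_vert hvw)
    simp only [hf, dif_pos hex]
    exact congrArg (fun u => s(v, u)) (huniq.unique hex.choose_spec hvw)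
  have hmem : ∀ v ∈ M.verts.toFinset, f v ∈ M.edgeSet.toFinset := by
    intro v hv
    rw [Set.mem_toFinset] at hv ⊢
    obtain ⟨w, hw, -⟩ := h hv
    rw [hfv v w hw]
    exact hw
  have key : ∀ a b, s(a, b) ∈ M.edgeSet →
      (M.verts.toFinset.filter (fun v => f v = s(a, b))).card = 2 := by
    intro a b hab
    rw [SimpleGraph.Subgraph.mem_edgeSet] at hab
    have hfilter : M.verts.toFinset.filter (fun v => f v = s(a, b)) = {a, b} := by
      ext v
      simp only [Finset.mem_filter, Set.mem_toFinset, Finset.mem_insert, Finset.mem_singleton]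
      constructor
      · rintro ⟨hv, hfveq⟩
        obtain ⟨w, hw, -⟩ := h hv
        have : v ∈ s(a, b) := by rw [← hfveq, hfv v w hw]; exact Sym2.mem_mk_left v w
        simpa using this
      · rintro (rfl | rfl)
        · exact ⟨M.edge_vert hab, hfv _ _ hab⟩
        · exact ⟨M.edge_vert hab.symm, by rw [hfv _ _ hab.symm, Sym2.eq_swap]⟩
    rw [hfilter, Finset.card_insert_of_notMem (by simpa using hab.ne), Finset.card_singleton]
  have key' : ∀ e ∈ M.edgeSet.toFinset, (M.verts.toFinset.filter (fun v => f v = e)).card = 2 :=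
    fun e => Sym2.ind (fun a b he => key a b (Set.mem_toFinset.mp he)) e
  have hsum := Finset.card_eq_sum_card_fiberwise hmem
  rw [Finset.sum_congr rfl key', Finset.sum_const, smul_eq_mul] at hsum
  rw [Set.ncard_eq_toFinset_card', Set.ncard_eq_toFinset_card', hsum, Nat.mul_comm]

lemma stmt8_exists_clique_matching :
    ∀ (n : ℕ) (S : Set V), S.Pairwise G.Adj → S.ncard = 2 * n →
      ∃ N : G.Subgraph, N.IsMatching ∧ N.verts = S ∧ N.edgeSet.ncard = n := by
  intro n
  induction n with
  | zero =>
    intro S hp h0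
    have hS : S = ∅ := (Set.ncard_eq_zero S.toFinite).mp (by simpa using h0)
    subst hS
    refine ⟨⊥, ?_, by simp, by simp⟩
    intro v hv
    simp only [SimpleGraph.Subgraph.verts_bot, Set.mem_empty_iff_false] at hv
  | succ n ih =>
    intro S hp hcard
    have h1 : S.Nonempty := Set.nonempty_of_ncard_ne_zero (by omega)
    obtain ⟨x, hx⟩ := h1
    have h2 : (S \ {x}).Nonempty := Set.nonempty_of_ncard_ne_zero (by
      rw [Set.ncard_diff_singleton_of_mem hx]; omega)
    obtain ⟨y, hyS, hyx⟩ := h2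
    rw [Set.mem_singleton_iff] at hyx
    have hadj : G.Adj x y := hp hx hyS (Ne.symm hyx)
    have hsub : {x, y} ⊆ S := by
      rw [Set.insert_subset_iff, Set.singleton_subset_iff]; exact ⟨hx, hyS⟩
    have hdiff : S \ {x, y} = (S \ {x}) \ {y} := by
      rw [Set.diff_diff, Set.singleton_union]
    have hScard : (S \ {x, y}).ncard = 2 * n := by
      rw [hdiff, Set.ncard_diff_singleton_of_mem (show y ∈ S \ {x} from ⟨hyS, hyx⟩),
        Set.ncard_diff_singleton_of_mem hx]
      omega
    obtain ⟨N', hN'm, hN'v, hN'e⟩ := ih (S \ {x, y}) (hp.mono Set.diff_subset) hScard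
    refine ⟨G.subgraphOfAdj hadj ⊔ N', ?_, ?_, ?_⟩
    · refine (SimpleGraph.Subgraph.IsMatching.subgraphOfAdj hadj).sup hN'm ?_
      refine Set.disjoint_of_subset (SimpleGraph.Subgraph.support_subset_verts _)
        (SimpleGraph.Subgraph.support_subset_verts _) ?_
      rw [SimpleGraph.subgraphOfAdj_verts, hN'v]
      exact Set.disjoint_sdiff_right
    · rw [SimpleGraph.Subgraph.verts_sup, SimpleGraph.subgraphOfAdj_verts, hN'v]
      exact Set.union_diff_cancel hsub
    · rw [SimpleGraph.Subgraph.edgeSet_sup, SimpleGraph.edgeSet_subgraphOfAdj,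
        Set.singleton_union, Set.ncard_insert_of_notMem ?_, hN'e]
      intro hmem
      have := N'.edge_vert (SimpleGraph.Subgraph.mem_edgeSet.mp hmem)
      rw [hN'v] at this
      exact this.2 (by simp)

omit [Fintype V] in
lemma stmt8_extend_matching {M N : G.Subgraph}
    (hM : M.IsMatching) (hN : N.IsMatching) (hV : N.verts = M.vertsᶜ) :
    ∃ M' : G.Subgraph, M ≤ M' ∧ M'.IsPerfectMatching := by
  refine ⟨M ⊔ N, le_sup_left, ?_, ?_⟩
  · exact hM.sup hN (by
      rw [hM.support_eq_verts, hN.support_eq_verts, hV]; exact disjoint_compl_right)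
  · rw [SimpleGraph.Subgraph.isSpanning_iff, SimpleGraph.Subgraph.verts_sup, hV]
    exact Set.union_compl_self _

end MatchingHelpers

namespace Stmt8
variable {k : ℕ}

def loneL : GkV k := Sum.inl (Sum.inr 0)
def loneR : GkV k := Sum.inr (Sum.inr 0)

lemma adj_LR (x y : Fin (2 * k - 1) ⊕ Fin 1) : (Gk k).Adj (Sum.inl x) (Sum.inr y) := by
  rw [Gk, fromRel_adj]
  exact ⟨by simp, Or.inl (Or.inl (by simp))⟩

lemma adj_clique_L {a b : Fin (2 * k - 1)} (h : a ≠ b) :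
    (Gk k).Adj (Sum.inl (Sum.inl a)) (Sum.inl (Sum.inl b)) := by
  rw [Gk, fromRel_adj]
  exact ⟨by simp [h], Or.inl (Or.inr (Or.inl ⟨a, b, rfl, rfl⟩))⟩

lemma adj_clique_R {a b : Fin (2 * k - 1)} (h : a ≠ b) :
    (Gk k).Adj (Sum.inr (Sum.inl a)) (Sum.inr (Sum.inl b)) := by
  rw [Gk, fromRel_adj]
  exact ⟨by simp [h], Or.inl (Or.inr (Or.inr ⟨a, b, rfl, rfl⟩))⟩

lemma not_adj_R (i : Fin 1) (x : Fin (2 * k - 1) ⊕ Fin 1) :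
    ¬ (Gk k).Adj (Sum.inr (Sum.inr i)) (Sum.inr x) := by
  rw [Gk, fromRel_adj]
  rintro ⟨-, (h | ⟨a, b, h1, -⟩ | ⟨a, b, h1, -⟩) | (h | ⟨a, b, -, h2⟩ | ⟨a, b, -, h2⟩)⟩ <;>
    simp_all

lemma not_adj_L (i : Fin 1) (x : Fin (2 * k - 1) ⊕ Fin 1) :
    ¬ (Gk k).Adj (Sum.inl (Sum.inr i)) (Sum.inl x) := by
  rw [Gk, fromRel_adj]
  rintro ⟨-, (h | ⟨a, b, h1, -⟩ | ⟨a, b, h1, -⟩) | (h | ⟨a, b, -, h2⟩ | ⟨a, b, -, h2⟩)⟩ <;>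
    simp_all

def IsCl (x : GkV k) : Prop :=
  (∃ a, x = Sum.inl (Sum.inl a)) ∨ (∃ a, x = Sum.inr (Sum.inl a))

lemma isCl_of_ne_lone {x : GkV k} (h1 : x ≠ loneL) (h2 : x ≠ loneR) : IsCl x := by
  rcases x with (a | i) | (a | i)
  · exact Or.inl ⟨a, rfl⟩
  · exact absurd (by rw [Subsingleton.elim i 0]; rfl) h1
  · exact Or.inr ⟨a, rfl⟩
  · exact absurd (by rw [Subsingleton.elim i 0]; rfl) h2

lemma pairwise_adj {S : Set (GkV k)} (hS : ∀ x ∈ S, IsCl x) : S.Pairwise (Gk k).Adj := by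
  intro x hx y hy hne
  rcases hS x hx with ⟨a, rfl⟩ | ⟨a, rfl⟩ <;> rcases hS y hy with ⟨b, rfl⟩ | ⟨b, rfl⟩
  · exact adj_clique_L (by rintro rfl; exact hne rfl)
  · exact adj_LR _ _
  · exact (adj_LR _ _).symm
  · exact adj_clique_R (by rintro rfl; exact hne rfl)

lemma card_half (hk : 2 ≤ k) : Nat.card (Fin (2 * k - 1) ⊕ Fin 1) = 2 * k := by
  simp [Nat.card_eq_fintype_card]
  omega

lemma ncard_range_inl (hk : 2 ≤ k) :
    (Set.range (Sum.inl : (Fin (2 * k - 1) ⊕ Fin 1) → GkV k)).ncard = 2 * k := by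
  rw [← Set.image_univ, Set.ncard_image_of_injective _ Sum.inl_injective, Set.ncard_univ,
    card_half hk]

lemma ncard_range_inr (hk : 2 ≤ k) :
    (Set.range (Sum.inr : (Fin (2 * k - 1) ⊕ Fin 1) → GkV k)).ncard = 2 * k := by
  rw [← Set.image_univ, Set.ncard_image_of_injective _ Sum.inr_injective, Set.ncard_univ,
    card_half hk]

lemma gk_connected : (Gk k).Connected := by
  have hreach : ∀ x : GkV k, (Gk k).Reachable x loneL := by
    intro x
    rcases x with x | x
    · exact (adj_LR x (Sum.inr 0)).reachable.trans
        ((adj_LR (Sum.inr 0) (Sum.inr 0)).symm).reachable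
    · exact ((adj_LR (Sum.inr 0) x).symm).reachable
  exact { preconnected := fun x y => (hreach x).trans (hreach y).symm, nonempty := ⟨loneL⟩ }

lemma build (hk : 2 ≤ k) (U : Set (GkV k)) (x y : GkV k) (hxy : (Gk k).Adj x y)
    (hx : x ∈ U) (hy : y ∈ U)
    (hcl : ∀ z ∈ U, z ≠ x → z ≠ y → IsCl z) (hcard : U.ncard = 2 * k) :
    ∃ N : (Gk k).Subgraph, N.IsMatching ∧ N.verts = U := by
  have hne : x ≠ y := hxy.ne
  have hsub : {x, y} ⊆ U := by
    rw [Set.insert_subset_iff, Set.singleton_subset_iff]; exact ⟨hx, hy⟩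
  have hScard : (U \ {x, y}).ncard = 2 * (k - 1) := by
    rw [show U \ {x, y} = (U \ {x}) \ {y} from by rw [Set.diff_diff, Set.singleton_union],
      Set.ncard_diff_singleton_of_mem (show y ∈ U \ {x} from ⟨hy, hne.symm⟩),
      Set.ncard_diff_singleton_of_mem hx]
    omega
  obtain ⟨N', hN'm, hN'v, -⟩ := stmt8_exists_clique_matching (k - 1) (U \ {x, y})
    (pairwise_adj (fun z hz => hcl z hz.1
      (fun h => hz.2 (by simp [h])) (fun h => hz.2 (by simp [h])))) hScard
  refine ⟨(Gk k).subgraphOfAdj hxy ⊔ N', ?_, ?_⟩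
  · refine (SimpleGraph.Subgraph.IsMatching.subgraphOfAdj hxy).sup hN'm ?_
    refine Set.disjoint_of_subset (SimpleGraph.Subgraph.support_subset_verts _)
      (SimpleGraph.Subgraph.support_subset_verts _) ?_
    rw [SimpleGraph.subgraphOfAdj_verts, hN'v]
    exact Set.disjoint_sdiff_right
  · rw [SimpleGraph.Subgraph.verts_sup, SimpleGraph.subgraphOfAdj_verts, hN'v]
    exact Set.union_diff_cancel hsub

end Stmt8

open Stmt8 in
/-- for `k ≥ 2`, `G^(k)` is `k`-extendable. -/
theorem stmt8 (k : ℕ) (hk : 2 ≤ k) : Extendable (Gk k) k := by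
  refine ⟨gk_connected, ?_, ?_⟩
  · -- a matching of size k
    set S0 : Set (GkV k) :=
      (Set.range (Sum.inl : _ → GkV k) \ {loneL}) ∪ {loneR} with hS0def
    have hmem : ∀ x ∈ S0, (∃ a, x = Sum.inl (Sum.inl a)) ∨ x = loneR := by
      rintro x (⟨⟨x', rfl⟩, hne⟩ | rfl)
      · rcases x' with a | i
        · exact Or.inl ⟨a, rfl⟩
        · exact absurd (show (Sum.inl (Sum.inr i) : GkV k) = loneL from by
            rw [Subsingleton.elim i 0]; rfl) hne
      · exact Or.inr rfl
    have hpair : S0.Pairwise (Gk k).Adj := by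
      intro x hx y hy hne
      rcases hmem x hx with ⟨a, rfl⟩ | rfl <;> rcases hmem y hy with ⟨b, rfl⟩ | rfl
      · exact adj_clique_L (by rintro rfl; exact hne rfl)
      · exact adj_LR _ _
      · exact (adj_LR _ _).symm
      · exact absurd rfl hne
    have hcard : S0.ncard = 2 * k := by
      rw [hS0def, Set.union_singleton, Set.ncard_insert_of_notMem (by
        rintro ⟨⟨x', h⟩, -⟩; exact Sum.inl_ne_inr h),
        Set.ncard_diff_singleton_of_mem (show loneL ∈ Set.range (Sum.inl : _ → GkV k) from ⟨Sum.inr 0, rfl⟩), ncard_range_inl hk]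
      omega
    obtain ⟨N, hNm, -, hNe⟩ := stmt8_exists_clique_matching k S0 hpair hcard
    exact ⟨N, hNm, hNe⟩
  · -- extension
    intro M hM hMe
    have hMv : M.verts.ncard = 2 * k := by rw [stmt8_matching_ncard_verts hM, hMe]
    have hU : (M.vertsᶜ : Set (GkV k)).ncard = 2 * k := by
      have h1 := Set.ncard_add_ncard_compl M.verts
      have h2 : Nat.card (GkV k) = 4 * k := by
        simp [Nat.card_eq_fintype_card]
        omega
      omega
    by_cases hL : loneL ∈ M.vertsᶜ <;> by_cases hR : loneR ∈ M.vertsᶜ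
    · obtain ⟨N, hNm, hNv⟩ := build hk M.vertsᶜ loneL loneR
        (adj_LR (Sum.inr 0) (Sum.inr 0)) hL hR
        (fun z _ h1 h2 => isCl_of_ne_lone h1 h2) hU
      exact stmt8_extend_matching hM hNm hNv
    · have hw : ∃ a : Fin (2 * k - 1), Sum.inr (Sum.inl a) ∈ M.vertsᶜ := by
        by_contra hcon
        push_neg at hcon
        have hsub : M.vertsᶜ ⊆ Set.range (Sum.inl : _ → GkV k) := by
          intro z hz
          rcases z with z | (a | i)
          · exact ⟨z, rfl⟩
          · exact absurd hz (hcon a)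
          · rw [Subsingleton.elim i 0] at hz
            exact absurd hz hR
        have hEq : M.vertsᶜ = Set.range Sum.inl :=
          Set.eq_of_subset_of_ncard_le hsub (by rw [ncard_range_inl hk, hU])
        have hMverts : M.verts = Set.range Sum.inr := by
          rw [← compl_compl M.verts, hEq, Set.compl_range_inl]
        have hmemR : loneR ∈ M.verts := by rw [hMverts]; exact ⟨Sum.inr 0, rfl⟩
        obtain ⟨w, hw', -⟩ := hM hmemR
        have hwv : w ∈ M.verts := M.edge_vert hw'.symm
        rw [hMverts] at hwv
        obtain ⟨w', rfl⟩ := hwv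
        exact not_adj_R 0 w' (M.adj_sub hw')
      obtain ⟨a, haU⟩ := hw
      obtain ⟨N, hNm, hNv⟩ := build hk M.vertsᶜ loneL (Sum.inr (Sum.inl a))
        (adj_LR (Sum.inr 0) (Sum.inl a)) hL haU
        (fun z hz h1 _ => isCl_of_ne_lone h1 (fun h => hR (h ▸ hz))) hU
      exact stmt8_extend_matching hM hNm hNv
    · have hw : ∃ a : Fin (2 * k - 1), Sum.inl (Sum.inl a) ∈ M.vertsᶜ := by
        by_contra hcon
        push_neg at hcon
        have hsub : M.vertsᶜ ⊆ Set.range (Sum.inr : _ → GkV k) := by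
          intro z hz
          rcases z with (a | i) | z
          · exact absurd hz (hcon a)
          · rw [Subsingleton.elim i 0] at hz
            exact absurd hz hL
          · exact ⟨z, rfl⟩
        have hEq : M.vertsᶜ = Set.range Sum.inr :=
          Set.eq_of_subset_of_ncard_le hsub (by rw [ncard_range_inr hk, hU])
        have hMverts : M.verts = Set.range Sum.inl := by
          rw [← compl_compl M.verts, hEq, Set.compl_range_inr]
        have hmemL : loneL ∈ M.verts := by rw [hMverts]; exact ⟨Sum.inr 0, rfl⟩
        obtain ⟨w, hw', -⟩ := hM hmemL
        have hwv : w ∈ M.verts := M.edge_vert hw'.symm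
        rw [hMverts] at hwv
        obtain ⟨w', rfl⟩ := hwv
        exact not_adj_L 0 w' (M.adj_sub hw')
      obtain ⟨a, haU⟩ := hw
      obtain ⟨N, hNm, hNv⟩ := build hk M.vertsᶜ (Sum.inl (Sum.inl a)) loneR
        (adj_LR (Sum.inl a) (Sum.inr 0)) haU hR
        (fun z hz _ h2 => isCl_of_ne_lone (fun h => hL (h ▸ hz)) h2) hU
      exact stmt8_extend_matching hM hNm hNv
    · obtain ⟨N, hNm, hNv, -⟩ := stmt8_exists_clique_matching k M.vertsᶜ
        (pairwise_adj (fun z hz => isCl_of_ne_lone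
          (fun h => hL (h ▸ hz)) (fun h => hR (h ▸ hz)))) hU
      exact stmt8_extend_matching hM hNm hNv
end

section
/- Let G be a connected graph with a perfect matching, S ⊆ V(G), M̄ a maximum matching of G − S leaving exactly the two vertices v₁ and v₂ of G − S uncovered, and suppose G − S has no perfect matching. Then for every edge y₁y₂ of M̄, the number of edges of G from {v₁, v₂} to {y₁, y₂} is at most 2. -/
open SimpleGraph

lemma auxPM {W : Type*} (H : SimpleGraph W) (v₁ v₂ : W) (hne : v₁ ≠ v₂)
    (M : H.Subgraph) (hM : M.IsMatching)
    (hverts : M.verts = Set.univ \ {v₁, v₂})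
    (y₁ y₂ : W) (hy : M.Adj y₁ y₂)
    (z₁ z₂ : W) (hz : ({z₁, z₂} : Set W) = {y₁, y₂}) (hzne : z₁ ≠ z₂)
    (h1 : H.Adj v₁ z₁) (h2 : H.Adj v₂ z₂) :
    ∃ N : H.Subgraph, N.IsPerfectMatching := by
  have hy1v : y₁ ∈ M.verts := M.edge_vert hy
  have hy2v : y₂ ∈ M.verts := M.edge_vert hy.symm
  have hv1 : v₁ ∉ M.verts := by rw [hverts]; simp
  have hv2 : v₂ ∉ M.verts := by rw [hverts]; simp
  have hz1y : z₁ ∈ ({y₁, y₂} : Set W) := hz ▸ (by simp)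
  have hz2y : z₂ ∈ ({y₁, y₂} : Set W) := hz ▸ (by simp)
  have hz1v : z₁ ∈ M.verts := by rcases hz1y with h | h <;> simp_all
  have hz2v : z₂ ∈ M.verts := by rcases hz2y with h | h <;> simp_all
  set M' := M.deleteVerts {y₁, y₂} with hM'def
  have hM' : M'.IsMatching := by
    rintro v ⟨hv, hvny⟩
    obtain ⟨w, hw, huniq⟩ := hM hv
    have hwny : w ∉ ({y₁, y₂} : Set W) := by
      rintro (rfl | rfl)
      · have : v = y₂ := (hM hy1v).unique hw.symm hy
        exact hvny (by simp [this])
      · have : v = y₁ := (hM hy2v).unique hw.symm hy.symm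
        exact hvny (by simp [this])
    refine ⟨w, ?_, ?_⟩
    · exact SimpleGraph.Subgraph.deleteVerts_adj.mpr ⟨hv, hvny, M.edge_vert hw.symm, hwny, hw⟩
    · intro y hy'
      exact huniq y (SimpleGraph.Subgraph.deleteVerts_adj.mp hy').2.2.2.2
  have hsup1 : (H.subgraphOfAdj h1).support ⊆ {v₁, z₁} := by
    intro x hx
    have := (H.subgraphOfAdj h1).support_subset_verts hx
    simpa using this
  have hsup2 : (H.subgraphOfAdj h2).support ⊆ {v₂, z₂} := by
    intro x hx
    have := (H.subgraphOfAdj h2).support_subset_verts hx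
    simpa using this
  have hM'sup : M'.support ⊆ M.verts \ {y₁, y₂} := by
    intro x hx
    have := M'.support_subset_verts hx
    simpa [hM'def] using this
  have hd1 : Disjoint M'.support (H.subgraphOfAdj h1).support := by
    refine Set.disjoint_left.mpr fun x hx hx' => ?_
    rcases hsup1 hx' with rfl | rfl
    · exact hv1 (hM'sup hx).1
    · exact (hM'sup hx).2 hz1y
  have hm1 : (M' ⊔ H.subgraphOfAdj h1).IsMatching := hM'.sup (Subgraph.IsMatching.subgraphOfAdj h1) hd1
  have hd2 : Disjoint (M' ⊔ H.subgraphOfAdj h1).support (H.subgraphOfAdj h2).support := by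
    refine Set.disjoint_left.mpr fun x hx hx' => ?_
    have hx2 : x = v₂ ∨ x = z₂ := hsup2 hx'
    have hxv : x ∈ M'.support ∨ x ∈ (H.subgraphOfAdj h1).support := by
      obtain ⟨y, hy'⟩ := (Subgraph.mem_support _).mp hx
      rcases hy' with h | h
      · exact Or.inl ⟨y, h⟩
      · exact Or.inr ⟨y, h⟩
    rcases hxv with hxm | hx1
    · rcases hx2 with rfl | rfl
      · exact hv2 (hM'sup hxm).1
      · exact (hM'sup hxm).2 hz2y
    · rcases hsup1 hx1 with rfl | rfl
      · rcases hx2 with h | h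
        · exact hne h
        · exact hv1 (h ▸ hz2v)
      · rcases hx2 with h | h
        · exact hv2 (h ▸ hz1v)
        · exact hzne h
  refine ⟨(M' ⊔ H.subgraphOfAdj h1) ⊔ H.subgraphOfAdj h2,
    hm1.sup (Subgraph.IsMatching.subgraphOfAdj h2) hd2, fun w => ?_⟩
  simp only [Subgraph.verts_sup, subgraphOfAdj_verts, hM'def, Subgraph.deleteVerts_verts, hverts]
  by_cases hw1 : w = v₁
  · subst hw1; simp
  by_cases hw2 : w = v₂
  · subst hw2; simp
  by_cases hwy : w ∈ ({y₁, y₂} : Set W)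
  · have : w ∈ ({z₁, z₂} : Set W) := hz ▸ hwy
    rcases this with rfl | rfl <;> simp
  · exact Or.inl (Or.inl ⟨⟨Set.mem_univ w, by simp [hw1, hw2]⟩, hwy⟩)

/-- if `M` is a maximum matching of `G - S` leaving exactly `v₁, v₂`
uncovered and `G - S` has no perfect matching, then for each edge `y₁y₂` of `M`
there are at most two edges between `{v₁, v₂}` and `{y₁, y₂}`. -/
theorem stmt15 {V : Type*} [Fintype V] (G : SimpleGraph V) (S : Set V)
    (hconn : G.Connected)
    (hPM : ∃ M : G.Subgraph, M.IsPerfectMatching)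
    (v₁ v₂ : ↑(Sᶜ)) (hne : v₁ ≠ v₂)
    (M : (G.induce Sᶜ).Subgraph) (hM : M.IsMatching)
    (hverts : M.verts = Set.univ \ {v₁, v₂})
    (hnoPM : ¬ ∃ N : (G.induce Sᶜ).Subgraph, N.IsPerfectMatching)
    (y₁ y₂ : ↑(Sᶜ)) (hy : M.Adj y₁ y₂) :
    Set.ncard {e : Sym2 ↑(Sᶜ) | e ∈ (G.induce Sᶜ).edgeSet ∧
      ∃ a b, a ∈ ({v₁, v₂} : Set ↑(Sᶜ)) ∧ b ∈ ({y₁, y₂} : Set ↑(Sᶜ)) ∧ e = s(a, b)} ≤ 2 := by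
  have hyne : y₁ ≠ y₂ := hy.ne
  have key1 : ¬((G.induce Sᶜ).Adj v₁ y₁ ∧ (G.induce Sᶜ).Adj v₂ y₂) := by
    rintro ⟨h1, h2⟩
    exact hnoPM (auxPM (G.induce Sᶜ) v₁ v₂ hne M hM hverts y₁ y₂ hy y₁ y₂ rfl hyne h1 h2)
  have key2 : ¬((G.induce Sᶜ).Adj v₁ y₂ ∧ (G.induce Sᶜ).Adj v₂ y₁) := by
    rintro ⟨h1, h2⟩
    exact hnoPM (auxPM (G.induce Sᶜ) v₁ v₂ hne M hM hverts y₁ y₂ hy y₂ y₁ (Set.pair_comm y₂ y₁)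
      hyne.symm h1 h2)
  have h2card : ∀ (e f : Sym2 ↑(Sᶜ)) (T : Set (Sym2 ↑(Sᶜ))), T ⊆ {e, f} → T.ncard ≤ 2 := by
    intro e f T h
    refine le_trans (Set.ncard_le_ncard h (Set.toFinite _)) ?_
    refine le_trans (Set.ncard_insert_le _ _) ?_
    simp
  have hsub : ∀ (c d c' d' : ↑(Sᶜ)),
      (∀ a b : ↑(Sᶜ), a ∈ ({v₁, v₂} : Set ↑(Sᶜ)) → b ∈ ({y₁, y₂} : Set ↑(Sᶜ)) →
        (G.induce Sᶜ).Adj a b → s(a, b) ∈ ({s(c, d), s(c', d')} : Set (Sym2 ↑(Sᶜ)))) →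
      {e : Sym2 ↑(Sᶜ) | e ∈ (G.induce Sᶜ).edgeSet ∧
        ∃ a b, a ∈ ({v₁, v₂} : Set ↑(Sᶜ)) ∧ b ∈ ({y₁, y₂} : Set ↑(Sᶜ)) ∧ e = s(a, b)}
        ⊆ {s(c, d), s(c', d')} := by
    rintro c d c' d' hall e ⟨hedge, a, b, ha, hb, rfl⟩
    exact hall a b ha hb (((G.induce Sᶜ).mem_edgeSet).mp hedge)
  rcases not_and_or.mp key1 with hA | hA <;> rcases not_and_or.mp key2 with hB | hB
  · refine h2card s(v₂, y₁) s(v₂, y₂) _ (hsub _ _ _ _ ?_)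
    rintro a b (rfl | ha) (rfl | hb) hadj
    · exact absurd hadj hA
    · rw [Set.mem_singleton_iff] at hb; subst hb; exact absurd hadj hB
    · rw [Set.mem_singleton_iff] at ha; subst ha; simp
    · rw [Set.mem_singleton_iff] at ha hb; subst ha; subst hb; simp
  · refine h2card s(v₁, y₂) s(v₂, y₂) _ (hsub _ _ _ _ ?_)
    rintro a b (rfl | ha) (rfl | hb) hadj
    · exact absurd hadj hA
    · rw [Set.mem_singleton_iff] at hb; subst hb; simp
    · rw [Set.mem_singleton_iff] at ha; subst ha; exact absurd hadj hB
    · rw [Set.mem_singleton_iff] at ha hb; subst ha; subst hb; simp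
  · refine h2card s(v₁, y₁) s(v₂, y₁) _ (hsub _ _ _ _ ?_)
    rintro a b (rfl | ha) (rfl | hb) hadj
    · simp
    · rw [Set.mem_singleton_iff] at hb; subst hb; exact absurd hadj hB
    · rw [Set.mem_singleton_iff] at ha; subst ha; simp
    · rw [Set.mem_singleton_iff] at ha hb; subst ha; subst hb; exact absurd hadj hA
  · refine h2card s(v₁, y₁) s(v₁, y₂) _ (hsub _ _ _ _ ?_)
    rintro a b (rfl | ha) (rfl | hb) hadj
    · simp
    · rw [Set.mem_singleton_iff] at hb; subst hb; simp
    · rw [Set.mem_singleton_iff] at ha; subst ha; exact absurd hadj hB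
    · rw [Set.mem_singleton_iff] at ha hb; subst ha; subst hb; exact absurd hadj hA
end
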